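/- arXiv:1812.02337 — 2 statements merged into one kernel-verified Lean document; each statement's English description precedes it below -/
import Mathlib

section
/- Let Π ∈ M^{m×k} with rank(Π) ≤ r and M ∈ M^{m×k}. Then min over U ∈ Ψ(Π) and V ∈ M^{k×(k−r)} of ‖ΠV + MU‖² equals Σ_{j=r−r₀+1}^{k−r₀} σ_j²(P₂ᵀ M Q₂), where r₀ = rank(Π), Ψ(Π) = argmin_{U ∈ S^{k×(k−r)}} ‖ΠU‖², and P₂, Q₂ consist of the left/right singular vectors of Π associated with its zero singular values. -/
open Matrix Filter Topology

noncomputable def frobNormSq {m k : ℕ} (A : Matrix (Fin m) (Fin k) ℝ) : ℝ :=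
  Matrix.trace (Aᵀ * A)

noncomputable def frobNorm {m k : ℕ} (A : Matrix (Fin m) (Fin k) ℝ) : ℝ :=
  Real.sqrt (frobNormSq A)

theorem transpose_mul_self_isHermitian {m k : ℕ} (A : Matrix (Fin m) (Fin k) ℝ) :
    (Aᵀ * A).IsHermitian := by
  have h := Matrix.isHermitian_conjTranspose_mul_self A
  rwa [Matrix.conjTranspose_eq_transpose_of_trivial] at h

/-- `sv A j` is the `j+1`-th largest singular value of `A`. -/
noncomputable def sv {m k : ℕ} (A : Matrix (Fin m) (Fin k) ℝ) : Fin k → ℝ :=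
  fun j =>
    Real.sqrt ((transpose_mul_self_isHermitian A).eigenvalues
      (Tuple.sort ((transpose_mul_self_isHermitian A).eigenvalues) j.rev))

/-- `phi r A` is the sum of the squared singular values `σ_{r+1}², …, σ_k²`. -/
noncomputable def phi {m k : ℕ} (r : ℕ) (A : Matrix (Fin m) (Fin k) ℝ) : ℝ :=
  ∑ j ∈ Finset.univ.filter (fun j : Fin k => r ≤ (j : ℕ)), sv A j ^ 2

/-- The argmin set `Ψ(A)` of `U ↦ ‖A U‖²` over matrices with orthonormal columns. -/
noncomputable def argminSet {m k : ℕ} (d : ℕ) (A : Matrix (Fin m) (Fin k) ℝ) :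
    Set (Matrix (Fin k) (Fin d) ℝ) :=
  {U | Uᵀ * U = 1 ∧ ∀ V : Matrix (Fin k) (Fin d) ℝ, Vᵀ * V = 1 →
    frobNormSq (A * U) ≤ frobNormSq (A * V)}

noncomputable def phiDeriv {m k : ℕ} (r : ℕ) (A M : Matrix (Fin m) (Fin k) ℝ) : ℝ :=
  sInf {x : ℝ | ∃ U ∈ argminSet (k - r) A, x = 2 * Matrix.trace ((A * U)ᵀ * (M * U))}

/-! Since `rank A ≤ r`, the kernel of `A`, spanned by the columns of `Q₂`, contains `k - r`
orthonormal vectors, so `Ψ(A)` consists exactly of the matrices `U = Q₂ W` with `Wᵀ W = 1`.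
Multiplying by `P₂ᵀ` kills `A V` and does not increase the Frobenius norm, hence
`‖A V + M U‖² ≥ ‖B W‖² = tr (Wᵀ Bᵀ B W)` with `B = P₂ᵀ M Q₂`, and by Ky Fan's minimum principle
this trace is at least the sum of the `k - r` smallest eigenvalues of `Bᵀ B`, which is
`phi (r - rank A) B`. Equality holds when the columns of `W` are the corresponding eigenvectors
and `A V` cancels the part of `M U` lying in `range A = ker P₂ᵀ`. -/

open Finset

section Frobenius

variable {m n d : ℕ}

@[simp]
lemma frobNormSq_zero : frobNormSq (0 : Matrix (Fin m) (Fin n) ℝ) = 0 := by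
  simp [frobNormSq]

lemma frobNormSq_nonneg (A : Matrix (Fin m) (Fin n) ℝ) : 0 ≤ frobNormSq A := by
  simpa [frobNormSq, conjTranspose_eq_transpose_of_trivial] using
    (posSemidef_conjTranspose_mul_self A).trace_nonneg

lemma frobNormSq_eq_zero_iff {A : Matrix (Fin m) (Fin n) ℝ} : frobNormSq A = 0 ↔ A = 0 := by
  simpa [frobNormSq, conjTranspose_eq_transpose_of_trivial] using
    trace_conjTranspose_mul_self_eq_zero_iff (A := A)

lemma frobNormSq_mul (B : Matrix (Fin m) (Fin n) ℝ) (W : Matrix (Fin n) (Fin d) ℝ) :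
    frobNormSq (B * W) = trace (Wᵀ * (Bᵀ * B) * W) := by
  simp only [frobNormSq, transpose_mul, Matrix.mul_assoc]

lemma frobNormSq_mul_of_transpose_mul_self_eq_one {P : Matrix (Fin m) (Fin n) ℝ}
    (hP : Pᵀ * P = 1) (Y : Matrix (Fin n) (Fin d) ℝ) : frobNormSq (P * Y) = frobNormSq Y := by
  rw [frobNormSq_mul, hP, Matrix.mul_one, frobNormSq]

lemma posSemidef_one_sub_mul_transpose {ι κ : Type*} [Fintype ι] [Fintype κ] [DecidableEq ι]
    [DecidableEq κ] {P : Matrix ι κ ℝ} (hP : Pᵀ * P = 1) : (1 - P * Pᵀ).PosSemidef := by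
  have hidem : P * Pᵀ * (P * Pᵀ) = P * Pᵀ := by
    rw [Matrix.mul_assoc, ← Matrix.mul_assoc Pᵀ, hP, Matrix.one_mul]
  have hproj : (1 - P * Pᵀ)ᵀ * (1 - P * Pᵀ) = 1 - P * Pᵀ := by
    rw [transpose_sub, transpose_one, transpose_mul, transpose_transpose, Matrix.sub_mul,
      Matrix.mul_sub, Matrix.mul_sub, hidem]
    simp
  have h := posSemidef_conjTranspose_mul_self (1 - P * Pᵀ)
  rwa [conjTranspose_eq_transpose_of_trivial, hproj] at h

lemma frobNormSq_transpose_mul_le {P : Matrix (Fin m) (Fin n) ℝ} (hP : Pᵀ * P = 1)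
    (X : Matrix (Fin m) (Fin d) ℝ) : frobNormSq (Pᵀ * X) ≤ frobNormSq X := by
  have h := ((posSemidef_one_sub_mul_transpose hP).conjTranspose_mul_mul_same X).trace_nonneg
  rw [conjTranspose_eq_transpose_of_trivial, Matrix.mul_sub, Matrix.sub_mul, trace_sub] at h
  simpa [frobNormSq, transpose_mul, Matrix.mul_assoc] using h

end Frobenius

lemma transpose_mul_self_mul_left {R ι κ μ : Type*} [CommSemiring R] [Fintype ι] [Fintype κ]
    [DecidableEq κ] {Q : Matrix ι κ R} (hQ : Qᵀ * Q = 1) (W : Matrix κ μ R) :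
    (Q * W)ᵀ * (Q * W) = Wᵀ * W := by
  rw [transpose_mul, Matrix.mul_assoc, ← Matrix.mul_assoc Qᵀ, hQ, Matrix.one_mul]

section Rank

variable {K : Type*} [Field K]

lemma rank_eq_of_transpose_mul_self_eq_one {m n : ℕ} {P : Matrix (Fin m) (Fin n) K}
    (hP : Pᵀ * P = 1) : P.rank = n :=
  le_antisymm P.rank_le_width <| by
    simpa [hP] using rank_mul_le_right Pᵀ P

/-- The rank condition forces `range B = ker A`. -/
lemma exists_mul_eq_of_mul_eq_zero {m k q d : ℕ} {A : Matrix (Fin m) (Fin k) K}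
    {B : Matrix (Fin k) (Fin q) K} (hAB : A * B = 0) (hrank : A.rank + B.rank = k)
    {X : Matrix (Fin k) (Fin d) K} (hX : A * X = 0) :
    ∃ W : Matrix (Fin q) (Fin d) K, B * W = X := by
  have hle : LinearMap.range B.mulVecLin ≤ LinearMap.ker A.mulVecLin := by
    rintro _ ⟨y, rfl⟩
    simp [mulVec_mulVec, hAB]
  have hexact : LinearMap.range B.mulVecLin = LinearMap.ker A.mulVecLin := by
    refine Submodule.eq_of_le_of_finrank_le hle ?_
    have := LinearMap.finrank_range_add_finrank_ker A.mulVecLin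
    simp only [Module.finrank_fin_fun] at this
    change A.rank + _ = k at this
    change _ ≤ B.rank
    omega
  have hcol : ∀ j, Xᵀ j ∈ LinearMap.range B.mulVecLin := by
    intro j
    rw [hexact, LinearMap.mem_ker, mulVecLin_apply]
    ext i
    simpa [mul_apply, mulVec, dotProduct] using congrFun (congrFun hX i) j
  choose w hw using hcol
  refine ⟨Matrix.of fun i j => w j i, ?_⟩
  ext i j
  have hij := congrFun (hw j) i
  simp only [mulVecLin_apply, mulVec, dotProduct, transpose_apply] at hij
  simpa only [mul_apply, of_apply] using hij

end Rank

noncomputable def sumSmallest {n : ℕ} (μ : Fin n → ℝ) (d : ℕ) : ℝ :=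
  ∑ j ∈ univ.filter (fun j : Fin n => (j : ℕ) < d), μ (Tuple.sort μ j)

lemma filter_val_lt_eq_map_castLEEmb {n d : ℕ} (hdn : d ≤ n) :
    univ.filter (fun j : Fin n => (j : ℕ) < d) = univ.map (Fin.castLEEmb hdn) := by
  ext j
  simp only [mem_filter, mem_univ, true_and, Finset.mem_map, Fin.castLEEmb_apply]
  exact ⟨fun hj => ⟨⟨j, hj⟩, rfl⟩, by rintro ⟨i, rfl⟩; exact i.2⟩

lemma sum_filter_val_lt_le_sum_mul_of_monotone {n d : ℕ} (hd0 : 0 < d) (hdn : d ≤ n)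
    {ν t : Fin n → ℝ} (hν : Monotone ν) (ht0 : ∀ i, 0 ≤ t i) (ht1 : ∀ i, t i ≤ 1)
    (hsum : ∑ i, t i = d) :
    ∑ j ∈ univ.filter (fun j : Fin n => (j : ℕ) < d), ν j ≤ ∑ i, ν i * t i := by
  -- `c` separates the first `d` values of `ν` from the others.
  set c := ν ⟨d - 1, by omega⟩
  have hpoint : ∀ j : Fin n, (if (j : ℕ) < d then ν j - c else 0) ≤ (ν j - c) * t j := by
    intro j
    split_ifs with hj
    · have : ν j ≤ c := hν (Fin.mk_le_mk.mpr (by omega))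
      nlinarith [ht1 j]
    · have : c ≤ ν j := hν (Fin.mk_le_mk.mpr (by omega))
      nlinarith [ht0 j]
  have hcard : #(univ.filter fun j : Fin n => (j : ℕ) < d) = d := by
    simp [Fin.card_filter_val_lt, hdn]
  have h := sum_le_sum fun j (_ : j ∈ univ) => hpoint j
  rw [← sum_filter, sum_sub_distrib, sum_const, hcard, nsmul_eq_mul] at h
  simp only [sub_mul, sum_sub_distrib, ← mul_sum, hsum] at h
  linarith

lemma trace_transpose_mul_diagonal_mul {ι κ : Type*} [Fintype ι] [Fintype κ] [DecidableEq ι]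
    (μ : ι → ℝ) (Y : Matrix ι κ ℝ) :
    trace (Yᵀ * diagonal μ * Y) = ∑ i, μ i * ∑ j, Y i j ^ 2 := by
  simp only [trace, Matrix.diag, mul_apply, transpose_apply, diagonal_apply, mul_sum]
  rw [sum_comm]
  refine sum_congr rfl fun i _ => sum_congr rfl fun j _ => ?_
  simp only [mul_ite, mul_zero, sum_ite_eq', mem_univ, if_true]
  ring

lemma sum_sq_row_le_one {ι κ : Type*} [Fintype ι] [Fintype κ] [DecidableEq ι] [DecidableEq κ]
    {Y : Matrix ι κ ℝ} (hY : Yᵀ * Y = 1) (i : ι) : ∑ j, Y i j ^ 2 ≤ 1 := by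
  have h := (posSemidef_one_sub_mul_transpose hY).diag_nonneg (i := i)
  simp only [Matrix.sub_apply, one_apply_eq, mul_apply, transpose_apply] at h
  simpa [sq] using h

lemma sum_sum_sq_eq_card {ι κ : Type*} [Fintype ι] [Fintype κ] [DecidableEq κ]
    {Y : Matrix ι κ ℝ} (hY : Yᵀ * Y = 1) : ∑ i, ∑ j, Y i j ^ 2 = Fintype.card κ := by
  have h := congrArg trace hY
  simp only [trace, Matrix.diag, mul_apply, transpose_apply] at h
  rw [sum_comm]
  simpa [sq] using h

/-- The squared row norms of `Y` are weights in `[0, 1]` of total mass `d`. -/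
lemma sumSmallest_le_trace_transpose_mul_diagonal_mul {n d : ℕ} (hd0 : 0 < d) (hdn : d ≤ n)
    (μ : Fin n → ℝ) {Y : Matrix (Fin n) (Fin d) ℝ} (hY : Yᵀ * Y = 1) :
    sumSmallest μ d ≤ trace (Yᵀ * diagonal μ * Y) := by
  set σ := Tuple.sort μ
  rw [trace_transpose_mul_diagonal_mul, ← Equiv.sum_comp σ]
  refine sum_filter_val_lt_le_sum_mul_of_monotone (ν := μ ∘ σ) (t := fun i => ∑ j, Y (σ i) j ^ 2)
    hd0 hdn (Tuple.monotone_sort μ) (fun _ => by positivity) (fun i => sum_sq_row_le_one hY _) ?_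
  rw [Equiv.sum_comp σ fun i => ∑ j, Y i j ^ 2, sum_sum_sq_eq_card hY, Fintype.card_fin]

lemma exists_trace_transpose_mul_diagonal_mul_eq_sumSmallest {n d : ℕ} (hdn : d ≤ n)
    (μ : Fin n → ℝ) :
    ∃ Y : Matrix (Fin n) (Fin d) ℝ, Yᵀ * Y = 1 ∧ trace (Yᵀ * diagonal μ * Y) = sumSmallest μ d := by
  set f : Fin d → Fin n := Tuple.sort μ ∘ Fin.castLE hdn
  have hf : Function.Injective f := (Tuple.sort μ).injective.comp (Fin.castLE_injective hdn)
  set E : Matrix (Fin n) (Fin d) ℝ := (1 : Matrix (Fin n) (Fin n) ℝ).submatrix id f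
  have hE : ∀ X : Matrix (Fin n) (Fin n) ℝ, Eᵀ * X * E = X.submatrix f f := by
    intro X
    ext i j
    simp [E, mul_apply, one_apply]
  refine ⟨E, by simpa using (hE 1).trans (submatrix_one f hf), ?_⟩
  rw [hE, submatrix_diagonal _ _ hf, trace_diagonal, sumSmallest,
    filter_val_lt_eq_map_castLEEmb hdn, sum_map]
  rfl

lemma Matrix.IsHermitian.exists_orthogonal_diagonalization {ι : Type*} [Fintype ι]
    [DecidableEq ι] {S : Matrix ι ι ℝ} (hS : S.IsHermitian) :
    ∃ V : Matrix ι ι ℝ, Vᵀ * V = 1 ∧ V * Vᵀ = 1 ∧ S = V * diagonal hS.eigenvalues * Vᵀ := by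
  refine ⟨hS.eigenvectorUnitary, ?_, ?_, ?_⟩
  · rw [← conjTranspose_eq_transpose_of_trivial]
    exact mem_unitaryGroup_iff'.mp hS.eigenvectorUnitary.2
  · rw [← conjTranspose_eq_transpose_of_trivial]
    exact mem_unitaryGroup_iff.mp hS.eigenvectorUnitary.2
  · conv_lhs => rw [hS.spectral_theorem]
    simp [star_eq_conjTranspose, conjTranspose_eq_transpose_of_trivial]

/-- Ky Fan's minimum principle. -/
theorem Matrix.IsHermitian.isLeast_trace_transpose_mul_mul {n d : ℕ}
    {S : Matrix (Fin n) (Fin n) ℝ} (hS : S.IsHermitian) (hd0 : 0 < d) (hdn : d ≤ n) :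
    IsLeast {x | ∃ W : Matrix (Fin n) (Fin d) ℝ, Wᵀ * W = 1 ∧ x = trace (Wᵀ * S * W)}
      (sumSmallest hS.eigenvalues d) := by
  obtain ⟨V, hVV, hVV', hSV⟩ := hS.exists_orthogonal_diagonalization
  have hconj : ∀ W : Matrix (Fin n) (Fin d) ℝ,
      Wᵀ * S * W = (Vᵀ * W)ᵀ * diagonal hS.eigenvalues * (Vᵀ * W) := by
    intro W
    conv_lhs => rw [hSV]
    simp only [transpose_mul, transpose_transpose, Matrix.mul_assoc]
  obtain ⟨Y, hY, hYtr⟩ := exists_trace_transpose_mul_diagonal_mul_eq_sumSmallest hdn hS.eigenvalues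
  refine ⟨⟨V * Y, by rw [transpose_mul_self_mul_left hVV, hY], ?_⟩, ?_⟩
  · rw [hconj, ← Matrix.mul_assoc Vᵀ V Y, hVV, Matrix.one_mul, hYtr]
  · rintro _ ⟨W, hW, rfl⟩
    rw [hconj]
    refine sumSmallest_le_trace_transpose_mul_diagonal_mul hd0 hdn _ ?_
    rwa [transpose_mul_self_mul_left (by rwa [transpose_transpose])]

lemma phi_eq_sumSmallest {m k : ℕ} (r : ℕ) (B : Matrix (Fin m) (Fin k) ℝ) :
    phi r B = sumSmallest (transpose_mul_self_isHermitian B).eigenvalues (k - r) := by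
  have hpsd : (Bᵀ * B).PosSemidef := by
    simpa [conjTranspose_eq_transpose_of_trivial] using posSemidef_conjTranspose_mul_self B
  unfold phi sv sumSmallest
  simp only [Real.sq_sqrt (hpsd.eigenvalues_nonneg _)]
  refine sum_equiv Fin.revPerm (fun j => ?_) (fun j _ => rfl)
  simp only [mem_filter, mem_univ, true_and, Fin.revPerm_apply, Fin.val_rev]
  omega

lemma argminSet_eq_of_exists_mul_eq_zero {m k d : ℕ} {A : Matrix (Fin m) (Fin k) ℝ}
    (h : ∃ U₀ : Matrix (Fin k) (Fin d) ℝ, U₀ᵀ * U₀ = 1 ∧ A * U₀ = 0) :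
    argminSet d A = {U | Uᵀ * U = 1 ∧ A * U = 0} := by
  obtain ⟨U₀, hU₀, hAU₀⟩ := h
  ext U
  refine ⟨fun ⟨hU, hmin⟩ => ⟨hU, ?_⟩, fun ⟨hU, hAU⟩ => ⟨hU, fun V _ => ?_⟩⟩
  · have := hmin U₀ hU₀
    rw [hAU₀, frobNormSq_zero] at this
    exact frobNormSq_eq_zero_iff.mp (le_antisymm this (frobNormSq_nonneg _))
  · rw [hAU, frobNormSq_zero]
    exact frobNormSq_nonneg _

theorem min_reprentation_second_deriv_general {m k : ℕ} (r : ℕ) (hr : r < k)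
    (A : Matrix (Fin m) (Fin k) ℝ) (hrank : A.rank ≤ r)
    (P₂ : Matrix (Fin m) (Fin (m - A.rank)) ℝ) (Q₂ : Matrix (Fin k) (Fin (k - A.rank)) ℝ)
    (hP : P₂ᵀ * P₂ = 1) (hPA : P₂ᵀ * A = 0)
    (hQ : Q₂ᵀ * Q₂ = 1) (hAQ : A * Q₂ = 0)
    (M : Matrix (Fin m) (Fin k) ℝ) :
    IsLeast
      {x : ℝ | ∃ U ∈ argminSet (k - r) A, ∃ V : Matrix (Fin k) (Fin (k - r)) ℝ,
        x = frobNormSq (A * V + M * U)}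
      (phi (r - A.rank) (P₂ᵀ * M * Q₂)) := by
  set B := P₂ᵀ * M * Q₂
  obtain ⟨⟨W₀, hW₀, hW₀tr⟩, hlower⟩ :=
    (transpose_mul_self_isHermitian B).isLeast_trace_transpose_mul_mul (d := k - r) (by omega)
      (by omega)
  have hrankP : P₂ᵀ.rank + A.rank = m := by
    rw [rank_transpose, rank_eq_of_transpose_mul_self_eq_one hP,
      Nat.sub_add_cancel A.rank_le_height]
  have hrankQ : A.rank + Q₂.rank = k := by
    rw [rank_eq_of_transpose_mul_self_eq_one hQ, Nat.add_sub_cancel' A.rank_le_width]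
  have hQW : ∀ W : Matrix (Fin (k - A.rank)) (Fin (k - r)) ℝ,
      (Q₂ * W)ᵀ * (Q₂ * W) = Wᵀ * W ∧ A * (Q₂ * W) = 0 := fun W =>
    ⟨transpose_mul_self_mul_left hQ W, by rw [← Matrix.mul_assoc, hAQ, Matrix.zero_mul]⟩
  have hPMQ : ∀ W : Matrix (Fin (k - A.rank)) (Fin (k - r)) ℝ, P₂ᵀ * (M * (Q₂ * W)) = B * W := by
    simp only [B, Matrix.mul_assoc, implies_true]
  have hU₀ : (Q₂ * W₀)ᵀ * (Q₂ * W₀) = 1 ∧ A * (Q₂ * W₀) = 0 := ⟨(hQW W₀).1.trans hW₀, (hQW W₀).2⟩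
  rw [phi_eq_sumSmallest, show k - A.rank - (r - A.rank) = k - r by omega,
    argminSet_eq_of_exists_mul_eq_zero ⟨_, hU₀⟩]
  constructor
  · -- `A * V₀` cancels the component of `M * Q₂ * W₀` in `range A = ker P₂ᵀ`.
    obtain ⟨V₀, hV₀⟩ := exists_mul_eq_of_mul_eq_zero hPA hrankP
      (X := P₂ * (P₂ᵀ * (M * (Q₂ * W₀))) - M * (Q₂ * W₀))
      (by rw [Matrix.mul_sub, ← Matrix.mul_assoc, hP, Matrix.one_mul, sub_self])
    refine ⟨Q₂ * W₀, hU₀, V₀, ?_⟩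
    rw [hV₀, sub_add_cancel, frobNormSq_mul_of_transpose_mul_self_eq_one hP, hPMQ, frobNormSq_mul,
      hW₀tr]
  · rintro _ ⟨U, ⟨hU, hAU⟩, V, rfl⟩
    obtain ⟨W, rfl⟩ := exists_mul_eq_of_mul_eq_zero hAQ hrankQ hAU
    calc sumSmallest _ (k - r)
        ≤ trace (Wᵀ * (Bᵀ * B) * W) := hlower ⟨W, (hQW W).1.symm.trans hU, rfl⟩
      _ = frobNormSq (P₂ᵀ * (A * V + M * (Q₂ * W))) := by
        rw [Matrix.mul_add, ← Matrix.mul_assoc P₂ᵀ A V, hPA, Matrix.zero_mul, zero_add, hPMQ,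
          frobNormSq_mul]
      _ ≤ frobNormSq (A * V + M * (Q₂ * W)) := frobNormSq_transpose_mul_le hP _

/-- `min_{U ∈ Ψ(A), V} ‖A V + M U‖² = Σ_{j=r−r₀+1}^{k−r₀} σ_j²(P₂ᵀ M Q₂)`. -/
theorem min_reprentation_second_deriv {m k : ℕ} (hk : k ≤ m) (r : ℕ) (hr : r < k)
    (A : Matrix (Fin m) (Fin k) ℝ) (hrank : A.rank ≤ r)
    (P₂ : Matrix (Fin m) (Fin (m - A.rank)) ℝ) (Q₂ : Matrix (Fin k) (Fin (k - A.rank)) ℝ)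
    (hP : P₂ᵀ * P₂ = 1) (hPA : P₂ᵀ * A = 0)
    (hQ : Q₂ᵀ * Q₂ = 1) (hAQ : A * Q₂ = 0)
    (M : Matrix (Fin m) (Fin k) ℝ) :
    IsLeast
      {x : ℝ | ∃ U ∈ argminSet (k - r) A, ∃ V : Matrix (Fin k) (Fin (k - r)) ℝ,
        x = frobNormSq (A * V + M * U)}
      (phi (r - A.rank) (P₂ᵀ * M * Q₂)) :=
  min_reprentation_second_deriv_general r hr A hrank P₂ Q₂ hP hPA hQ hAQ M
end

section
/- Let Π₀ ∈ M^{m×k} have rank r₀, and let Π̂_n be random matrices with τ_n‖Π̂_n − Π₀‖ bounded in probability for some τ_n → ∞. Let κ_n > 0 satisfy κ_n → 0 and τ_n κ_n → ∞, and define r̂_n to be the largest j ∈ {1,…,k} with σ_j(Π̂_n) ≥ κ_n (and r̂_n = 0 if no such j exists). Then P(r̂_n = r₀) → 1. -/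
/-!
Weyl's inequality `σ_j(A) ≤ σ_j(B) + ‖A - B‖` is the Courant–Fischer argument: the span of the
top `j + 1` eigenvectors of `AᵀA` and the span of the bottom `k - j` eigenvectors of `BᵀB` meet in
a nonzero `x`, and on it `σ_j(A) ‖x‖ ≤ ‖A x‖ ≤ ‖B x‖ + ‖(A - B) x‖ ≤ (σ_j(B) + ‖A - B‖) ‖x‖`.

Outside the event `τ_n ‖Π̂_n - Π₀‖ > C`, which has probability at most `ε` for large `n`, we have
`‖Π̂_n - Π₀‖ ≤ C / τ_n < κ_n` once `τ_n κ_n > C`, and eventually `2 κ_n` is below every positive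
singular value of `Π₀`. Weyl's inequality then puts `σ_j(Π̂_n)` below `κ_n` exactly for the
indices `j > r₀` at which `σ_j(Π₀) = 0`, so `r̂_n = r₀`.
-/

open Matrix Filter Topology

open MeasureTheory

/-- `rhat κ A` is the largest `j ∈ {1,…,k}` with `σ_j(A) ≥ κ`, and `0` if there is none. -/
noncomputable def rhat {m k : ℕ} (κ : ℝ) (A : Matrix (Fin m) (Fin k) ℝ) : ℕ :=
  sSup {j : ℕ | ∃ hj : j - 1 < k, 1 ≤ j ∧ κ ≤ sv A ⟨j - 1, hj⟩}

open scoped RealInnerProductSpace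

lemma Module.Basis.repr_eq_zero_of_mem_span_image {ι R M : Type*} [Semiring R]
    [AddCommMonoid M] [Module R M] (b : Module.Basis ι R M) {s : Set ι} {x : M}
    (hx : x ∈ Submodule.span R (b '' s)) {i : ι} (hi : i ∉ s) : b.repr x i = 0 :=
  Finsupp.notMem_support_iff.mp fun h => hi (b.mem_span_image.mp hx h)

lemma Module.Basis.finrank_span_image {ι K M : Type*} [DivisionRing K] [AddCommGroup M]
    [Module K M] (b : Module.Basis ι K M) (s : Finset ι) :
    Module.finrank K (Submodule.span K (b '' s)) = s.card := by
  rw [Set.image_eq_range]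
  exact (finrank_span_eq_card (b.linearIndependent.comp _ Subtype.val_injective)).trans
    (Fintype.card_coe s)

lemma Submodule.exists_ne_zero_mem_of_finrank_lt_add {K E : Type*} [DivisionRing K]
    [AddCommGroup E] [Module K E] [FiniteDimensional K E] {V W : Submodule K E}
    (h : Module.finrank K E < Module.finrank K V + Module.finrank K W) :
    ∃ x ≠ 0, x ∈ V ∧ x ∈ W := by
  by_contra! hVW
  exact h.not_ge (Submodule.finrank_add_finrank_le_of_disjoint
    (Submodule.disjoint_def.mpr fun x hV hW => by_contra fun hx => hVW x hx hV hW))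

lemma Antitone.lt_iff_lt_card_filter {α : Type*} [LinearOrder α] {k : ℕ} {f : Fin k → α}
    (hf : Antitone f) (a : α) (j : Fin k) :
    a < f j ↔ (j : ℕ) < (Finset.univ.filter fun i => a < f i).card := by
  constructor
  · intro hj
    have hsub : Finset.Iic j ⊆ Finset.univ.filter fun i => a < f i := fun i hi =>
      Finset.mem_filter.mpr ⟨Finset.mem_univ i, hj.trans_le (hf (Finset.mem_Iic.mp hi))⟩
    have := Finset.card_le_card hsub
    rw [Fin.card_Iic] at this
    omega
  · intro hj
    by_contra hja
    have hsub : (Finset.univ.filter fun i => a < f i) ⊆ Finset.Iio j := fun i hi =>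
      Finset.mem_Iio.mpr (lt_of_not_ge fun hji =>
        hja ((Finset.mem_filter.mp hi).2.trans_le (hf hji)))
    have := Finset.card_le_card hsub
    rw [Fin.card_Iio] at this
    omega

lemma OrthonormalBasis.norm_sq_eq_sum_repr_sq {ι E : Type*} [Fintype ι] [NormedAddCommGroup E]
    [InnerProductSpace ℝ E] (b : OrthonormalBasis ι ℝ E) (x : E) :
    ‖x‖ ^ 2 = ∑ i, b.repr x i ^ 2 := by
  simp only [b.repr_apply_apply, b.sum_sq_inner_right]

namespace Matrix.IsHermitian

variable {n : Type*} [Fintype n] [DecidableEq n] {S : Matrix n n ℝ} (hS : S.IsHermitian)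

lemma eigenvectorBasis_repr_toEuclideanLin (x : EuclideanSpace ℝ n) (i : n) :
    hS.eigenvectorBasis.repr (toEuclideanLin S x) i =
      hS.eigenvalues i * hS.eigenvectorBasis.repr x i := by
  have hb : toEuclideanLin S (hS.eigenvectorBasis i) =
      hS.eigenvalues i • hS.eigenvectorBasis i := by
    ext1; simp [hS.mulVec_eigenvectorBasis]
  rw [OrthonormalBasis.repr_apply_apply, OrthonormalBasis.repr_apply_apply,
    ← isSymmetric_toEuclideanLin_iff.mpr hS, hb, real_inner_smul_left]

lemma inner_toEuclideanLin_eq_sum (x : EuclideanSpace ℝ n) :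
    ⟪x, toEuclideanLin S x⟫ = ∑ i, hS.eigenvalues i * hS.eigenvectorBasis.repr x i ^ 2 := by
  rw [← hS.eigenvectorBasis.repr.inner_map_map, PiLp.inner_apply]
  simp only [eigenvectorBasis_repr_toEuclideanLin, RCLike.inner_apply, conj_trivial]
  exact Finset.sum_congr rfl fun i _ => by ring

variable {s : Set n} {c : ℝ} {x : EuclideanSpace ℝ n}

lemma mul_norm_sq_le_inner_of_mem_span (hc : ∀ i ∈ s, c ≤ hS.eigenvalues i)
    (hx : x ∈ Submodule.span ℝ (hS.eigenvectorBasis.toBasis '' s)) :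
    c * ‖x‖ ^ 2 ≤ ⟪x, toEuclideanLin S x⟫ := by
  rw [hS.inner_toEuclideanLin_eq_sum, hS.eigenvectorBasis.norm_sq_eq_sum_repr_sq, Finset.mul_sum]
  refine Finset.sum_le_sum fun i _ => ?_
  by_cases hi : i ∈ s
  · exact mul_le_mul_of_nonneg_right (hc i hi) (sq_nonneg _)
  · have := hS.eigenvectorBasis.toBasis.repr_eq_zero_of_mem_span_image hx hi
    simp_all

lemma inner_le_mul_norm_sq_of_mem_span (hc : ∀ i ∈ s, hS.eigenvalues i ≤ c)
    (hx : x ∈ Submodule.span ℝ (hS.eigenvectorBasis.toBasis '' s)) :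
    ⟪x, toEuclideanLin S x⟫ ≤ c * ‖x‖ ^ 2 := by
  rw [hS.inner_toEuclideanLin_eq_sum, hS.eigenvectorBasis.norm_sq_eq_sum_repr_sq, Finset.mul_sum]
  refine Finset.sum_le_sum fun i _ => ?_
  by_cases hi : i ∈ s
  · exact mul_le_mul_of_nonneg_right (hc i hi) (sq_nonneg _)
  · have := hS.eigenvectorBasis.toBasis.repr_eq_zero_of_mem_span_image hx hi
    simp_all

end Matrix.IsHermitian

section Frobenius

attribute [local instance] Matrix.frobeniusNormedAddCommGroup

variable {m k : ℕ}

lemma frobNorm_eq_norm (A : Matrix (Fin m) (Fin k) ℝ) : frobNorm A = ‖A‖ := by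
  rw [frobenius_norm_def, frobNorm, frobNormSq, Real.sqrt_eq_rpow]
  congr 1
  simp only [Matrix.trace, Matrix.diag, Matrix.mul_apply, Matrix.transpose_apply,
    Real.norm_eq_abs, Real.rpow_two, sq, abs_mul_abs_self]
  rw [Finset.sum_comm]

lemma frobNorm_sub_comm (A B : Matrix (Fin m) (Fin k) ℝ) :
    frobNorm (A - B) = frobNorm (B - A) := by
  simp only [frobNorm_eq_norm, norm_sub_rev]

lemma norm_toEuclideanLin_le_frobNorm (A : Matrix (Fin m) (Fin k) ℝ)
    (x : EuclideanSpace ℝ (Fin k)) : ‖toEuclideanLin A x‖ ≤ frobNorm A * ‖x‖ := by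
  rw [frobNorm_eq_norm, ← frobenius_norm_replicateCol (ι := Unit),
    ← frobenius_norm_replicateCol (ι := Unit)]
  simpa [replicateCol_mulVec] using frobenius_norm_mul A (replicateCol Unit x.ofLp)

end Frobenius

section SingularValues

variable {m k : ℕ}

lemma norm_toEuclideanLin_sq (A : Matrix (Fin m) (Fin k) ℝ) (x : EuclideanSpace ℝ (Fin k)) :
    ‖toEuclideanLin A x‖ ^ 2 = ⟪x, toEuclideanLin (Aᵀ * A) x⟫ := by
  rw [← real_inner_self_eq_norm_sq]
  simp only [toLpLin_apply, EuclideanSpace.inner_eq_star_dotProduct, star_trivial,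
    ← mulVec_mulVec, dotProduct_mulVec, mulVec_transpose]

lemma eigenvalues_transpose_mul_self_nonneg (A : Matrix (Fin m) (Fin k) ℝ) (i : Fin k) :
    0 ≤ (transpose_mul_self_isHermitian A).eigenvalues i := by
  simpa using (posSemidef_conjTranspose_mul_self A).eigenvalues_nonneg i

lemma sv_nonneg (A : Matrix (Fin m) (Fin k) ℝ) (j : Fin k) : 0 ≤ sv A j :=
  Real.sqrt_nonneg _

lemma sv_sq (A : Matrix (Fin m) (Fin k) ℝ) (j : Fin k) :
    sv A j ^ 2 = (transpose_mul_self_isHermitian A).eigenvalues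
      (Tuple.sort (transpose_mul_self_isHermitian A).eigenvalues j.rev) :=
  Real.sq_sqrt (eigenvalues_transpose_mul_self_nonneg A _)

lemma sv_antitone (A : Matrix (Fin m) (Fin k) ℝ) : Antitone (sv A) := fun _ _ h =>
  Real.sqrt_le_sqrt
    (Tuple.monotone_sort (transpose_mul_self_isHermitian A).eigenvalues (Fin.rev_le_rev.mpr h))

lemma card_filter_sv_pos (A : Matrix (Fin m) (Fin k) ℝ) :
    (Finset.univ.filter fun j => 0 < sv A j).card = A.rank := by
  set hA := transpose_mul_self_isHermitian A
  rw [← rank_transpose_mul_self, hA.rank_eq_card_non_zero_eigs, Fintype.card_subtype]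
  refine Finset.card_equiv (Fin.revPerm.trans (Tuple.sort hA.eigenvalues)) fun j => ?_
  simp [sv, Real.sqrt_pos, (eigenvalues_transpose_mul_self_nonneg A _).lt_iff_ne']

lemma sv_pos_iff_lt_rank (A : Matrix (Fin m) (Fin k) ℝ) (j : Fin k) :
    0 < sv A j ↔ (j : ℕ) < A.rank := by
  rw [(sv_antitone A).lt_iff_lt_card_filter, card_filter_sv_pos]

lemma exists_finrank_eq_forall_sv_mul_norm_le (A : Matrix (Fin m) (Fin k) ℝ) (j : Fin k) :
    ∃ V : Submodule ℝ (EuclideanSpace ℝ (Fin k)), Module.finrank ℝ V = j + 1 ∧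
      ∀ x ∈ V, sv A j * ‖x‖ ≤ ‖toEuclideanLin A x‖ := by
  set hA := transpose_mul_self_isHermitian A
  set p := Tuple.sort hA.eigenvalues
  refine ⟨Submodule.span ℝ (hA.eigenvectorBasis.toBasis '' ((Finset.Ici j.rev).map p.toEmbedding)),
    ?_, fun x hx => ?_⟩
  · rw [Module.Basis.finrank_span_image, Finset.card_map, Fin.card_Ici, Fin.val_rev]
    omega
  · refine (sq_le_sq₀ (mul_nonneg (sv_nonneg A j) (norm_nonneg x)) (norm_nonneg _)).mp ?_
    rw [mul_pow, sv_sq, norm_toEuclideanLin_sq]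
    refine hA.mul_norm_sq_le_inner_of_mem_span (fun i hi => ?_) hx
    obtain ⟨i', hi', rfl⟩ := Finset.mem_map.mp hi
    exact Tuple.monotone_sort hA.eigenvalues (Finset.mem_Ici.mp hi')

lemma exists_finrank_eq_forall_norm_le_sv_mul (A : Matrix (Fin m) (Fin k) ℝ) (j : Fin k) :
    ∃ W : Submodule ℝ (EuclideanSpace ℝ (Fin k)), Module.finrank ℝ W = k - j ∧
      ∀ x ∈ W, ‖toEuclideanLin A x‖ ≤ sv A j * ‖x‖ := by
  set hA := transpose_mul_self_isHermitian A
  set p := Tuple.sort hA.eigenvalues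
  refine ⟨Submodule.span ℝ (hA.eigenvectorBasis.toBasis '' ((Finset.Iic j.rev).map p.toEmbedding)),
    ?_, fun x hx => ?_⟩
  · rw [Module.Basis.finrank_span_image, Finset.card_map, Fin.card_Iic, Fin.val_rev]
    omega
  · refine (sq_le_sq₀ (norm_nonneg _) (mul_nonneg (sv_nonneg A j) (norm_nonneg x))).mp ?_
    rw [mul_pow, sv_sq, norm_toEuclideanLin_sq]
    refine hA.inner_le_mul_norm_sq_of_mem_span (fun i hi => ?_) hx
    obtain ⟨i', hi', rfl⟩ := Finset.mem_map.mp hi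
    exact Tuple.monotone_sort hA.eigenvalues (Finset.mem_Iic.mp hi')

lemma sv_le_sv_add_frobNorm (A B : Matrix (Fin m) (Fin k) ℝ) (j : Fin k) :
    sv A j ≤ sv B j + frobNorm (A - B) := by
  obtain ⟨V, hV, hAV⟩ := exists_finrank_eq_forall_sv_mul_norm_le A j
  obtain ⟨W, hW, hBW⟩ := exists_finrank_eq_forall_norm_le_sv_mul B j
  obtain ⟨x, hx0, hxV, hxW⟩ := Submodule.exists_ne_zero_mem_of_finrank_lt_add (V := V) (W := W)
    (by rw [finrank_euclideanSpace_fin, hV, hW]; omega)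
  refine le_of_mul_le_mul_right ?_ (norm_pos_iff.mpr hx0)
  calc sv A j * ‖x‖ ≤ ‖toEuclideanLin A x‖ := hAV x hxV
    _ ≤ ‖toEuclideanLin B x‖ + ‖toEuclideanLin (A - B) x‖ := by
      simpa using norm_add_le (toEuclideanLin B x) (toEuclideanLin (A - B) x)
    _ ≤ sv B j * ‖x‖ + frobNorm (A - B) * ‖x‖ :=
      add_le_add (hBW x hxW) (norm_toEuclideanLin_le_frobNorm _ _)
    _ = (sv B j + frobNorm (A - B)) * ‖x‖ := by ring

end SingularValues

lemma rhat_eq_of_forall_le_sv_iff {m k : ℕ} {κ : ℝ} {B : Matrix (Fin m) (Fin k) ℝ} {r : ℕ}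
    (hr : r ≤ k) (hB : ∀ j : Fin k, κ ≤ sv B j ↔ (j : ℕ) < r) : rhat κ B = r := by
  have hset : {j : ℕ | ∃ hj : j - 1 < k, 1 ≤ j ∧ κ ≤ sv B ⟨j - 1, hj⟩} = Set.Icc 1 r := by
    ext j
    simp only [Set.mem_ofPred_eq, Set.mem_Icc, hB]
    constructor
    · rintro ⟨_, hj1, hjr⟩
      exact ⟨hj1, by omega⟩
    · rintro ⟨hj1, hjr⟩
      exact ⟨by omega, hj1, by omega⟩
  rw [rhat, hset]
  rcases Nat.eq_zero_or_pos r with rfl | hr1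
  · simp
  · exact csSup_Icc hr1

lemma rhat_eq_rank_of_frobNorm_sub_lt {m k : ℕ} {κ : ℝ} {A B : Matrix (Fin m) (Fin k) ℝ}
    (hBA : frobNorm (B - A) < κ) (hA : ∀ j, 0 < sv A j → 2 * κ ≤ sv A j) :
    rhat κ B = A.rank := by
  refine rhat_eq_of_forall_le_sv_iff (rank_le_width A) fun j => ?_
  have hσA := sv_le_sv_add_frobNorm A B j
  have hσB := sv_le_sv_add_frobNorm B A j
  rw [frobNorm_sub_comm] at hσA
  rw [← sv_pos_iff_lt_rank]
  constructor
  · intro hκ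
    by_contra hA0
    linarith [not_lt.mp hA0]
  · intro hA0
    linarith [hA j hA0]

lemma MeasureTheory.tendsto_measure_of_tendsto_measure_compl {Ω ι : Type*}
    [MeasurableSpace Ω] {μ : Measure Ω} [IsProbabilityMeasure μ] {l : Filter ι}
    {s : ι → Set Ω} (h : Tendsto (fun i => μ (s i)ᶜ) l (𝓝 0)) :
    Tendsto (fun i => μ (s i)) l (𝓝 1) := by
  have hlow : Tendsto (fun i => 1 - μ (s i)ᶜ) l (𝓝 1) := by
    simpa using ENNReal.Tendsto.sub tendsto_const_nhds h (Or.inl ENNReal.one_ne_top)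
  refine tendsto_of_tendsto_of_tendsto_of_le_of_le hlow tendsto_const_nhds (fun i => ?_)
    (fun i => prob_le_one)
  rw [tsub_le_iff_right, ← measure_univ (μ := μ)]
  exact measure_univ_le_add_compl (s i)

theorem rank_estimator_consistent_general {m k : ℕ} {Ω : Type*} [MeasurableSpace Ω]
    (μ : Measure Ω) [IsProbabilityMeasure μ]
    (A₀ : Matrix (Fin m) (Fin k) ℝ) (Ahat : ℕ → Ω → Matrix (Fin m) (Fin k) ℝ)
    (τ : ℕ → ℝ) (hτ : Tendsto τ atTop atTop)
    (hOp : ∀ ε > (0 : ℝ), ∃ C : ℝ, ∀ᶠ n in atTop,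
      μ {ω | C < τ n * frobNorm (Ahat n ω - A₀)} ≤ ENNReal.ofReal ε)
    (κ : ℕ → ℝ) (hκ0 : Tendsto κ atTop (nhds 0))
    (hτκ : Tendsto (fun n => τ n * κ n) atTop atTop) :
    Tendsto (fun n => μ {ω | rhat (κ n) (Ahat n ω) = A₀.rank}) atTop (nhds 1) := by
  have hgap : ∀ᶠ n in atTop, ∀ j, 0 < sv A₀ j → 2 * κ n ≤ sv A₀ j :=
    eventually_all.2 fun j => by
      rcases le_or_gt (sv A₀ j) 0 with h | h
      · exact .of_forall fun _ hj => absurd hj h.not_gt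
      · filter_upwards [hκ0.eventually (gt_mem_nhds (half_pos h))] with n hn _
        linarith
  refine tendsto_measure_of_tendsto_measure_compl (ENNReal.tendsto_nhds_zero.2 fun ε hε => ?_)
  obtain ⟨ε', -, hε'pos, hε'⟩ := ENNReal.lt_iff_exists_real_btwn.1 hε
  obtain ⟨C, hC⟩ := hOp ε' (ENNReal.ofReal_pos.1 hε'pos)
  filter_upwards [hC, hτκ.eventually_gt_atTop C, hτ.eventually_gt_atTop 0, hgap]
    with n hCn hCκ hτpos hgapn
  refine (measure_mono fun ω hω => ?_).trans (hCn.trans hε'.le)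
  by_contra hsmall
  refine hω (rhat_eq_rank_of_frobNorm_sub_lt ?_ hgapn)
  exact lt_of_mul_lt_mul_left ((not_lt.mp hsmall).trans_lt hCκ) hτpos.le

/-- consistency of the thresholded rank estimator. -/
theorem rank_estimator_consistent {m k : ℕ} {Ω : Type*} [MeasurableSpace Ω]
    (μ : Measure Ω) [IsProbabilityMeasure μ]
    (A₀ : Matrix (Fin m) (Fin k) ℝ) (Ahat : ℕ → Ω → Matrix (Fin m) (Fin k) ℝ)
    (hmeas : ∀ n i j, Measurable fun ω => Ahat n ω i j)
    (τ : ℕ → ℝ) (hτ : Tendsto τ atTop atTop)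
    (hOp : ∀ ε > (0 : ℝ), ∃ C : ℝ, ∀ᶠ n in atTop,
      μ {ω | C < τ n * frobNorm (Ahat n ω - A₀)} ≤ ENNReal.ofReal ε)
    (κ : ℕ → ℝ) (hκpos : ∀ n, 0 < κ n) (hκ0 : Tendsto κ atTop (nhds 0))
    (hτκ : Tendsto (fun n => τ n * κ n) atTop atTop) :
    Tendsto (fun n => μ {ω | rhat (κ n) (Ahat n ω) = A₀.rank}) atTop (nhds 1) :=
  rank_estimator_consistent_general μ A₀ Ahat τ hτ hOp κ hκ0 hτκ
end
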